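/- Viewing $\Lambda_2$ as a function of $\omega$ (with $\alpha$ fixed), $\Lambda_2(\omega) = \int_{-\infty}^{\infty} R_0(s;\omega)^2\,ds$ is differentiable and strictly increasing: $\frac{d}{d\omega}\Lambda_2(\omega) > 0$ for all $\omega$ with $0 \le \beta(\omega) < 1$. -/

import Mathlib

/-!
Substituting `t = 2√ω s` gives `Λ₂(ω) = 2√ω ∫ dt / (1 + b cosh t)` with `b = √(1 - cω)`,
`c = -16α/3`. If `b² + r² = 1` with `b, r > 0`, then `t ↦ artanh (r sinh t / (b + cosh t)) / r`
is an antiderivative of `1 / (1 + b cosh t)` tending to `± artanh r / r` at `±∞`; hence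
`Λ₂(ω) = 4 artanh (√(cω)) / √c`, and `Λ₂(ω) = 4√ω` when `c = 0`. In both cases
`Λ₂'(ω) = 2 / (√ω (1 - cω)) > 0`.
-/

open MeasureTheory

open Real Filter Topology Set

namespace Real

theorem artanh_neg_eq_neg (x : ℝ) : artanh (-x) = -artanh x := by
  rw [artanh, artanh, ← log_inv, ← sqrt_inv, inv_div, sub_neg_eq_add, ← sub_eq_add_neg]

theorem hasDerivAt_artanh {x : ℝ} (hx : x ∈ Ioo (-1) 1) :
    HasDerivAt artanh (1 - x ^ 2)⁻¹ x := by
  obtain ⟨hx₁, hx₂⟩ := hx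
  have hlog : HasDerivAt (fun y => (log (1 + y) - log (1 - y)) / 2)
      ((1 / (1 + x) - -1 / (1 - x)) / 2) x :=
    ((((hasDerivAt_id' x).const_add 1).log (by simp; linarith)).sub
      (((hasDerivAt_id' x).const_sub 1).log (by simp; linarith))).div_const 2
  refine (hlog.congr_deriv ?_).congr_of_eventuallyEq ?_
  · have : 1 - x ^ 2 = (1 + x) * (1 - x) := by ring
    rw [this]
    field_simp [show 1 + x ≠ 0 by linarith, show 1 - x ≠ 0 by linarith]
    ring
  · filter_upwards [Ioo_mem_nhds hx₁ hx₂] with y ⟨hy₁, hy₂⟩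
    rw [artanh_eq_half_log ⟨hy₁.le, hy₂.le⟩, log_div (by linarith) (by linarith)]
    ring

end Real

section SinhDivAddCosh

variable {b : ℝ}

theorem hasDerivAt_sinh_div_add_cosh (hb : -1 < b) (t : ℝ) :
    HasDerivAt (fun t => sinh t / (b + cosh t)) ((1 + b * cosh t) / (b + cosh t) ^ 2) t := by
  have hpos : 0 < b + cosh t := by linarith [one_le_cosh t]
  refine ((hasDerivAt_sinh t).div ((hasDerivAt_cosh t).const_add b) hpos.ne').congr_deriv ?_
  rw [← cosh_sq_sub_sinh_sq t]
  ring

theorem tendsto_sinh_div_add_cosh_atTop (b : ℝ) :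
    Tendsto (fun t => sinh t / (b + cosh t)) atTop (𝓝 1) := by
  have hexp : Tendsto (fun t => exp (-t)) atTop (𝓝 0) := tendsto_exp_neg_atTop_nhds_zero
  have key : Tendsto (fun t => (1 - exp (-t) ^ 2) / (1 + 2 * b * exp (-t) + exp (-t) ^ 2))
      atTop (𝓝 ((1 - 0 ^ 2) / (1 + 2 * b * 0 + 0 ^ 2))) :=
    ((hexp.pow 2).const_sub 1).div
      ((((hexp.const_mul (2 * b)).const_add 1).add (hexp.pow 2))) (by norm_num)
  norm_num at key
  refine key.congr fun t => ?_
  have : exp (-t) * exp t = 1 := by rw [← exp_add]; simp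
  have h2e : 2 * exp (-t) ≠ 0 := by positivity
  rw [← mul_div_mul_right (sinh t) _ h2e, sinh_eq, cosh_eq]
  congr 1 <;> linear_combination -this

theorem tendsto_sinh_div_add_cosh_atBot (b : ℝ) :
    Tendsto (fun t => sinh t / (b + cosh t)) atBot (𝓝 (-1)) := by
  have := (tendsto_sinh_div_add_cosh_atTop b).comp tendsto_neg_atBot_atTop
  simpa [Function.comp_def, neg_div] using this.neg

end SinhDivAddCosh

theorem one_add_sq_le_four_mul_cosh (t : ℝ) : 1 + t ^ 2 ≤ 4 * cosh t := by
  have hquad := quadratic_le_exp_of_nonneg (abs_nonneg t)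
  have hcosh : cosh t = (exp |t| + exp (-|t|)) / 2 := by rw [← cosh_abs, cosh_eq]
  nlinarith [sq_abs t, exp_pos (-|t|), abs_nonneg t]

section IntegralInvOneAddMulCosh

variable {b r : ℝ}

theorem integrable_inv_one_add_mul_cosh (hb : 0 < b) :
    Integrable fun t => (1 + b * cosh t)⁻¹ := by
  have hpos : ∀ t, 0 < 1 + b * cosh t := fun t => by positivity
  refine (integrable_inv_one_add_sq.const_mul (4 / b)).mono'
    ((continuous_const.add (continuous_const.mul continuous_cosh)).inv₀
      fun t => (hpos t).ne').aestronglyMeasurable (ae_of_all _ fun t => ?_)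
  rw [norm_inv, Real.norm_of_nonneg (hpos t).le,
    show 4 / b * (1 + t ^ 2)⁻¹ = (b * (1 + t ^ 2) / 4)⁻¹ by field_simp]
  exact inv_anti₀ (by positivity) (by nlinarith [one_add_sq_le_four_mul_cosh t])

theorem integral_inv_one_add_cosh : ∫ t, (1 + cosh t)⁻¹ = 2 := by
  have hderiv : ∀ t, HasDerivAt (fun t => sinh t / (1 + cosh t)) (1 + cosh t)⁻¹ t := fun t =>
    (hasDerivAt_sinh_div_add_cosh (by norm_num) t).congr_deriv <| by
      have : 0 < 1 + cosh t := by positivity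
      field_simp
  have hint : Integrable fun t => (1 + cosh t)⁻¹ := by
    simpa using integrable_inv_one_add_mul_cosh one_pos
  rw [integral_of_hasDerivAt_of_tendsto hderiv hint (tendsto_sinh_div_add_cosh_atBot 1)
    (tendsto_sinh_div_add_cosh_atTop 1)]
  norm_num

theorem hasDerivAt_artanh_mul_sinh_div_add_cosh (hb : 0 ≤ b) (hr : 0 < r)
    (hbr : b ^ 2 + r ^ 2 = 1) (t : ℝ) :
    HasDerivAt (fun t => artanh (r * (sinh t / (b + cosh t))) / r) (1 + b * cosh t)⁻¹ t := by
  have hpos : 0 < b + cosh t := by linarith [one_le_cosh t]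
  have hpos' : 0 < 1 + b * cosh t := by positivity
  have key : 1 - (r * (sinh t / (b + cosh t))) ^ 2 = ((1 + b * cosh t) / (b + cosh t)) ^ 2 := by
    field_simp
    linear_combination (-sinh t ^ 2) * hbr + (1 - b ^ 2) * cosh_sq_sub_sinh_sq t
  have hmem : r * (sinh t / (b + cosh t)) ∈ Ioo (-1) 1 := by
    rw [mem_Ioo, ← abs_lt, ← sq_lt_one_iff_abs_lt_one]
    nlinarith [key, sq_pos_of_pos (div_pos hpos' hpos)]
  refine (((hasDerivAt_artanh hmem).comp t
    ((hasDerivAt_sinh_div_add_cosh (by linarith) t).const_mul r)).div_const r).congr_deriv ?_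
  rw [key]
  field_simp

theorem integral_inv_one_add_mul_cosh (hb : 0 < b) (hr : 0 < r) (hbr : b ^ 2 + r ^ 2 = 1) :
    ∫ t, (1 + b * cosh t)⁻¹ = 2 * artanh r / r := by
  have hr1 : r < 1 := by nlinarith
  have hlim : ∀ {l : Filter ℝ} {y : ℝ}, y ∈ Ioo (-1) 1 →
      Tendsto (fun t => sinh t / (b + cosh t)) l (𝓝 (y / r)) →
      Tendsto (fun t => artanh (r * (sinh t / (b + cosh t))) / r) l (𝓝 (artanh y / r)) :=
    fun hy h => by
      have := h.const_mul r
      rw [mul_div_cancel₀ _ hr.ne'] at this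
      exact ((hasDerivAt_artanh hy).continuousAt.tendsto.comp this).div_const r
  rw [integral_of_hasDerivAt_of_tendsto (hasDerivAt_artanh_mul_sinh_div_add_cosh hb.le hr hbr)
    (integrable_inv_one_add_mul_cosh hb)
    (hlim (y := -r) ⟨by linarith, by linarith⟩
      (by simpa [neg_div, hr.ne'] using tendsto_sinh_div_add_cosh_atBot b))
    (hlim (y := r) ⟨by linarith, hr1⟩
      (by simpa [hr.ne'] using tendsto_sinh_div_add_cosh_atTop b)),
    artanh_neg_eq_neg]
  ring

end IntegralInvOneAddMulCosh

theorem integral_div_one_add_mul_cosh_two_sqrt_mul {ω : ℝ} (hω : 0 < ω) (b : ℝ) :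
    ∫ s, 4 * ω / (1 + b * cosh (2 * √ω * s)) = 2 * √ω * ∫ t, (1 + b * cosh t)⁻¹ := by
  simp_rw [div_eq_mul_inv (4 * ω)]
  rw [integral_const_mul, Measure.integral_comp_mul_left (fun t => (1 + b * cosh t)⁻¹),
    smul_eq_mul, abs_of_pos (by positivity), ← mul_assoc]
  congr 1
  field_simp
  rw [sq_sqrt hω.le]
  ring

/-- `Λ₂(ω)` for `β(ω) = c ω`. -/
noncomputable def solitonMass (c ω : ℝ) : ℝ :=
  ∫ s, 4 * ω / (1 + √(1 - c * ω) * cosh (2 * √ω * s))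

theorem solitonMass_zero_left {ω : ℝ} (hω : 0 < ω) : solitonMass 0 ω = 4 * √ω := by
  rw [solitonMass, integral_div_one_add_mul_cosh_two_sqrt_mul hω]
  simp only [zero_mul, sub_zero, sqrt_one, one_mul, integral_inv_one_add_cosh]
  ring

theorem solitonMass_eq_artanh {c ω : ℝ} (hc : 0 < c) (hω : 0 < ω) (hcω : c * ω < 1) :
    solitonMass c ω = 4 * artanh (√c * √ω) / √c := by
  have hr : 0 < √c * √ω := by positivity
  rw [solitonMass, integral_div_one_add_mul_cosh_two_sqrt_mul hω,
    integral_inv_one_add_mul_cosh (sqrt_pos.2 (by linarith)) hr (by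
      rw [mul_pow, sq_sqrt (by linarith), sq_sqrt hc.le, sq_sqrt hω.le]; ring)]
  field_simp
  ring

theorem hasDerivAt_solitonMass {c ω : ℝ} (hc : 0 ≤ c) (hω : 0 < ω) (hcω : c * ω < 1) :
    HasDerivAt (solitonMass c) (2 / (√ω * (1 - c * ω))) ω := by
  rcases hc.eq_or_lt with rfl | hc
  · have hmass : solitonMass 0 =ᶠ[𝓝 ω] fun w => 4 * √w := by
      filter_upwards [Ioi_mem_nhds hω] with w hw using solitonMass_zero_left hw
    refine (((hasDerivAt_sqrt hω.ne').const_mul 4).congr_deriv ?_).congr_of_eventuallyEq hmass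
    field_simp
    ring
  · have hmass : solitonMass c =ᶠ[𝓝 ω] fun w => 4 * artanh (√c * √w) / √c := by
      filter_upwards [Ioo_mem_nhds hω ((lt_div_iff₀' hc).2 hcω)] with w hw
      exact solitonMass_eq_artanh hc hw.1 ((lt_div_iff₀' hc).1 hw.2)
    have hsq : (√c * √ω) ^ 2 = c * ω := by rw [mul_pow, sq_sqrt hc.le, sq_sqrt hω.le]
    have hmem : √c * √ω ∈ Ioo (-1) 1 := by
      rw [mem_Ioo, ← abs_lt, ← sq_lt_one_iff_abs_lt_one, hsq]
      exact hcω
    have hartanh : HasDerivAt (fun w => 4 * artanh (√c * √w) / √c)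
        (4 * ((1 - (√c * √ω) ^ 2)⁻¹ * (√c * (1 / (2 * √ω)))) / √c) ω :=
      (((hasDerivAt_artanh hmem).comp (h := fun w => √c * √w) ω
        ((hasDerivAt_sqrt hω.ne').const_mul √c)).const_mul 4).div_const √c
    refine (hartanh.congr_deriv ?_).congr_of_eventuallyEq hmass
    have : 0 < 1 - c * ω := by linarith
    rw [hsq]
    field_simp
    ring

/-- With `α` fixed, `Λ₂(ω) = ∫ R₀(s;ω)² ds` is differentiable and
strictly increasing (`dΛ₂/dω > 0`) for all `ω > 0` with `0 ≤ β(ω) < 1`, where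
`β(ω) = -16αω/3`. -/
theorem stmt17 (α : ℝ)
    (R0 : ℝ → ℝ → ℝ)
    (hR0 : ∀ ω z : ℝ, R0 ω z =
      Real.sqrt (4 * ω / (1 + Real.sqrt (1 - (-(16 / 3) * α * ω))
        * Real.cosh (2 * Real.sqrt ω * z))))
    (Λ2 : ℝ → ℝ)
    (hΛ2 : ∀ ω : ℝ, Λ2 ω = ∫ s : ℝ, (R0 ω s) ^ 2) :
    ∀ ω : ℝ, 0 < ω → 0 ≤ -(16 / 3) * α * ω → -(16 / 3) * α * ω < 1 →
      DifferentiableAt ℝ Λ2 ω ∧ 0 < deriv Λ2 ω := by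
  intro ω hω hβ₀ hβ₁
  have hΛ2_eq : Λ2 =ᶠ[𝓝 ω] solitonMass (-(16 / 3) * α) := by
    filter_upwards [Ioi_mem_nhds hω] with w hw
    rw [hΛ2, solitonMass]
    congr 1 with s
    rw [hR0, sq_sqrt (div_nonneg (by linarith [mem_Ioi.1 hw]) (by positivity))]
  have hderiv := (hasDerivAt_solitonMass (nonneg_of_mul_nonneg_left hβ₀ hω) hω
    hβ₁).congr_of_eventuallyEq hΛ2_eq
  exact ⟨hderiv.differentiableAt,
    hderiv.deriv ▸ div_pos two_pos (mul_pos (sqrt_pos.2 hω) (sub_pos.2 hβ₁))⟩
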